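/- Let μ > 0, let K be a nonempty finite index set with weights p_k ≥ 0 (k ∈ K) summing to 1, and for each k ∈ K let F_k : ℝ^n → ℝ be differentiable and μ-strongly convex, attaining its minimum at θ_k* ∈ ℝ^n. Let F : ℝ^n → ℝ attain its global minimum F* at θ* ∈ ℝ^n, and let ζ1, ζ2 ≥ 0 satisfy |F* − Σ_{k∈K} p_k F_k(θ_k*)| ≤ ζ1 and |F* − Σ_{k∈K} p_k F_k(θ*)| ≤ ζ2; set A = 2(ζ1 + ζ2). Then for every θ ∈ ℝ^n, Σ_{k∈K} p_k ‖θ − θ_k*‖² ≤ 2 ‖θ − θ*‖² + 2A/μ. -/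

import Mathlib

/-!
At a minimizer `θ_k*` of `F_k` the gradient vanishes, so strong convexity gives
`‖θ* − θ_k*‖² ≤ (2/μ)(F_k(θ*) − F_k(θ_k*))`. Combined with
`‖θ − θ_k*‖² ≤ 2‖θ − θ*‖² + 2‖θ* − θ_k*‖²` and averaged with the weights `p_k`, the
remaining term is `(4/μ) Σ p_k (F_k(θ*) − F_k(θ_k*))`, and this average gap is at most
`ζ1 + ζ2` by comparing both of its terms with `F*`.
-/

open RealInnerProductSpace

section StrongConvexity

variable {E : Type*} [NormedAddCommGroup E] [InnerProductSpace ℝ E] [CompleteSpace E]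

theorem IsLocalMin.gradient_eq_zero {f : E → ℝ} {x₀ : E} (h : IsLocalMin f x₀) :
    gradient f x₀ = 0 := by
  simp [gradient, h.fderiv_eq_zero]

theorem sq_norm_sub_le_of_isLocalMin {f : E → ℝ} {μ : ℝ} {x₀ : E} (hmin : IsLocalMin f x₀)
    (hsc : ∀ x, f x ≥ f x₀ + ⟪gradient f x₀, x - x₀⟫ + (μ / 2) * ‖x - x₀‖ ^ 2) (x : E) :
    μ / 2 * ‖x - x₀‖ ^ 2 ≤ f x - f x₀ := by
  have := hsc x
  rw [hmin.gradient_eq_zero, inner_zero_left] at this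
  linarith

end StrongConvexity

theorem sq_norm_sub_le_two_mul_add {E : Type*} [SeminormedAddCommGroup E] (a b c : E) :
    ‖a - c‖ ^ 2 ≤ 2 * ‖a - b‖ ^ 2 + 2 * ‖b - c‖ ^ 2 :=
  calc ‖a - c‖ ^ 2 ≤ (‖a - b‖ + ‖b - c‖) ^ 2 := by
        gcongr; exact norm_sub_le_norm_sub_add_norm_sub a b c
    _ ≤ 2 * ‖a - b‖ ^ 2 + 2 * ‖b - c‖ ^ 2 := by
        linarith [add_sq_le (a := ‖a - b‖) (b := ‖b - c‖)]

theorem Finset.sum_mul_add_mul_of_sum_eq_one {ι : Type*} {K : Finset ι} {p g : ι → ℝ}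
    (hsum : ∑ k ∈ K, p k = 1) (a b : ℝ) :
    ∑ k ∈ K, p k * (a + b * g k) = a + b * ∑ k ∈ K, p k * g k := by
  simp only [mul_add, Finset.sum_add_distrib, ← Finset.sum_mul, hsum, one_mul, Finset.mul_sum,
    mul_left_comm]

theorem weighted_sq_dist_to_local_minimizers_general
    {ι : Type*} (n : ℕ) (μ : ℝ) (hμ : 0 < μ)
    (K : Finset ι)
    (p : ι → ℝ) (hp : ∀ k ∈ K, 0 ≤ p k) (hsum : ∑ k ∈ K, p k = 1)
    (Fk : ι → EuclideanSpace ℝ (Fin n) → ℝ)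
    (hsc : ∀ k ∈ K, ∀ x y : EuclideanSpace ℝ (Fin n),
      Fk k x ≥ Fk k y + ⟪gradient (Fk k) y, x - y⟫ + (μ / 2) * ‖x - y‖ ^ 2)
    (θk : ι → EuclideanSpace ℝ (Fin n))
    (hθk : ∀ k ∈ K, ∀ x, Fk k (θk k) ≤ Fk k x)
    (F : EuclideanSpace ℝ (Fin n) → ℝ)
    (θstar : EuclideanSpace ℝ (Fin n))
    (ζ1 ζ2 : ℝ)
    (hΓ1 : |F θstar - ∑ k ∈ K, p k * Fk k (θk k)| ≤ ζ1)
    (hΓ2 : |F θstar - ∑ k ∈ K, p k * Fk k θstar| ≤ ζ2) :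
    ∀ θ : EuclideanSpace ℝ (Fin n),
      ∑ k ∈ K, p k * ‖θ - θk k‖ ^ 2
        ≤ 2 * ‖θ - θstar‖ ^ 2 + 2 * (2 * (ζ1 + ζ2)) / μ := by
  intro θ
  have hdist : ∀ k ∈ K, ‖θ - θk k‖ ^ 2 ≤
      2 * ‖θ - θstar‖ ^ 2 + 4 / μ * (Fk k θstar - Fk k (θk k)) := by
    intro k hk
    have hmin : IsLocalMin (Fk k) (θk k) :=
      IsMinOn.isLocalMin (fun x _ => hθk k hk x) Filter.univ_mem
    have hsq := sq_norm_sub_le_of_isLocalMin hmin (fun x => hsc k hk x (θk k)) θstar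
    have : 2 * ‖θstar - θk k‖ ^ 2 ≤ 4 / μ * (Fk k θstar - Fk k (θk k)) := by
      rw [div_mul_eq_mul_div, le_div_iff₀ hμ]; linarith
    linarith [sq_norm_sub_le_two_mul_add θ θstar (θk k)]
  have hgap : ∑ k ∈ K, p k * (Fk k θstar - Fk k (θk k)) ≤ ζ1 + ζ2 := by
    simp only [mul_sub, Finset.sum_sub_distrib]
    linarith [(abs_le.mp hΓ1).2, (abs_le.mp hΓ2).1]
  calc ∑ k ∈ K, p k * ‖θ - θk k‖ ^ 2
      ≤ ∑ k ∈ K, p k * (2 * ‖θ - θstar‖ ^ 2 + 4 / μ * (Fk k θstar - Fk k (θk k))) :=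
        Finset.sum_le_sum fun k hk => mul_le_mul_of_nonneg_left (hdist k hk) (hp k hk)
    _ = 2 * ‖θ - θstar‖ ^ 2 + 4 / μ * ∑ k ∈ K, p k * (Fk k θstar - Fk k (θk k)) :=
        Finset.sum_mul_add_mul_of_sum_eq_one hsum _ _
    _ ≤ 2 * ‖θ - θstar‖ ^ 2 + 4 / μ * (ζ1 + ζ2) := by gcongr
    _ = 2 * ‖θ - θstar‖ ^ 2 + 2 * (2 * (ζ1 + ζ2)) / μ := by ring

/-- Inequality (proofLm2_1) of the paper: for `μ`-strongly convex local losses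
`F_k` with minimizers `θ_k*`, heterogeneity bounds `ζ1, ζ2`, and
`A = 2(ζ1 + ζ2)`, one has `Σ p_k ‖θ − θ_k*‖² ≤ 2‖θ − θ*‖² + 2A/μ`. -/
theorem weighted_sq_dist_to_local_minimizers
    {ι : Type*} (n : ℕ) (μ : ℝ) (hμ : 0 < μ)
    (K : Finset ι) (hK : K.Nonempty)
    (p : ι → ℝ) (hp : ∀ k ∈ K, 0 ≤ p k) (hsum : ∑ k ∈ K, p k = 1)
    (Fk : ι → EuclideanSpace ℝ (Fin n) → ℝ)
    (hdiff : ∀ k ∈ K, Differentiable ℝ (Fk k))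
    (hsc : ∀ k ∈ K, ∀ x y : EuclideanSpace ℝ (Fin n),
      Fk k x ≥ Fk k y + ⟪gradient (Fk k) y, x - y⟫ + (μ / 2) * ‖x - y‖ ^ 2)
    (θk : ι → EuclideanSpace ℝ (Fin n))
    (hθk : ∀ k ∈ K, ∀ x, Fk k (θk k) ≤ Fk k x)
    (F : EuclideanSpace ℝ (Fin n) → ℝ)
    (θstar : EuclideanSpace ℝ (Fin n)) (hmin : ∀ θ, F θstar ≤ F θ)
    (ζ1 ζ2 : ℝ) (hζ1 : 0 ≤ ζ1) (hζ2 : 0 ≤ ζ2)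
    (hΓ1 : |F θstar - ∑ k ∈ K, p k * Fk k (θk k)| ≤ ζ1)
    (hΓ2 : |F θstar - ∑ k ∈ K, p k * Fk k θstar| ≤ ζ2) :
    ∀ θ : EuclideanSpace ℝ (Fin n),
      ∑ k ∈ K, p k * ‖θ - θk k‖ ^ 2
        ≤ 2 * ‖θ - θstar‖ ^ 2 + 2 * (2 * (ζ1 + ζ2)) / μ :=
  weighted_sq_dist_to_local_minimizers_general n μ hμ K p hp hsum Fk hsc θk hθk F θstar ζ1 ζ2 hΓ1
    hΓ2
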